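/- arXiv:2302.14593 — 2 statements merged into one kernel-verified Lean document; each statement's English description precedes it below -/
import Mathlib

section
/- Define g(α) = (sin α + √3 cos α)² / (2 sin α (√3 cos α − sin α)). Then for every α ∈ (0, π/6), the denominator 2 sin α (√3 cos α − sin α) is positive and g(α) > 4. -/
noncomputable def g (α : ℝ) : ℝ :=
  (Real.sin α + Real.sqrt 3 * Real.cos α) ^ 2 /
    (2 * Real.sin α * (Real.sqrt 3 * Real.cos α - Real.sin α))

theorem stmt14 (α : ℝ) (hα : α ∈ Set.Ioo 0 (Real.pi / 6)) :
    0 < 2 * Real.sin α * (Real.sqrt 3 * Real.cos α - Real.sin α) ∧ 4 < g α := by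
  obtain ⟨h0, h6⟩ := hα
  have hpi := Real.pi_pos
  have hs : 0 < Real.sin α := Real.sin_pos_of_pos_of_lt_pi h0 (by linarith)
  have hsin6 : 0 < Real.sin (Real.pi / 6 - α) := by
    apply Real.sin_pos_of_pos_of_lt_pi <;> [linarith; linarith]
  rw [Real.sin_sub, Real.sin_pi_div_six, Real.cos_pi_div_six] at hsin6
  have h3 : Real.sqrt 3 ^ 2 = 3 := Real.sq_sqrt (by norm_num)
  have h3pos : (0:ℝ) < Real.sqrt 3 := Real.sqrt_pos.mpr (by norm_num)
  -- from hsin6 : cos α / 2 > √3/2 * sin α, i.e. cos α > √3 sin α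
  have hkey : Real.sqrt 3 * Real.sin α < Real.cos α := by nlinarith
  have h3' : Real.sqrt 3 * Real.sqrt 3 = 3 := Real.mul_self_sqrt (by norm_num)
  have h2 : Real.sin α < Real.sqrt 3 * Real.cos α := by
    have := mul_lt_mul_of_pos_left hkey h3pos
    nlinarith
  have hden : 0 < 2 * Real.sin α * (Real.sqrt 3 * Real.cos α - Real.sin α) :=
    mul_pos (by linarith) (sub_pos.mpr h2)
  refine ⟨hden, ?_⟩
  rw [g, lt_div_iff₀ hden]
  have key : (Real.sin α + Real.sqrt 3 * Real.cos α) ^ 2 -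
      4 * (2 * Real.sin α * (Real.sqrt 3 * Real.cos α - Real.sin α)) =
      3 * ((Real.cos α - Real.sqrt 3 * Real.sin α) *
        (Real.cos α - Real.sqrt 3 * Real.sin α)) := by
    linear_combination (Real.cos α ^ 2 - 3 * Real.sin α ^ 2) * h3
  nlinarith [mul_pos (sub_pos.mpr hkey) (sub_pos.mpr hkey), key]
end

section
/- Define g(α) = (sin α + √3 cos α)² / (2 sin α (√3 cos α − sin α)). Then for every α ∈ (−π/6, 0), the denominator 2 sin α (√3 cos α − sin α) is negative and g(α) < −1/2. -/
theorem stmt15 (α : ℝ) (hα : α ∈ Set.Ioo (-(Real.pi / 6)) 0) :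
    2 * Real.sin α * (Real.sqrt 3 * Real.cos α - Real.sin α) < 0 ∧ g α < -(1 / 2) := by
  obtain ⟨h1, h2⟩ := hα
  have hpi := Real.pi_gt_three
  have hs3 : (0:ℝ) < Real.sqrt 3 := Real.sqrt_pos.mpr (by norm_num)
  have hs3sq : Real.sqrt 3 ^ 2 = 3 := Real.sq_sqrt (by norm_num)
  have hsin : Real.sin α < 0 := Real.sin_neg_of_neg_of_neg_pi_lt h2 (by linarith)
  have hcos : 0 < Real.cos α := Real.cos_pos_of_mem_Ioo ⟨by linarith, by linarith⟩
  have hkey : 0 < Real.sqrt 3 * Real.sin α + Real.cos α := by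
    have h := Real.sin_pos_of_pos_of_lt_pi (x := α + Real.pi / 6) (by linarith) (by linarith)
    rw [Real.sin_add, Real.cos_pi_div_six, Real.sin_pi_div_six] at h
    linarith
  have hpos : 0 < Real.sqrt 3 * Real.cos α - Real.sin α := by
    have := mul_pos hs3 hcos; linarith
  have hD : 2 * Real.sin α * (Real.sqrt 3 * Real.cos α - Real.sin α) < 0 :=
    mul_neg_of_neg_of_pos (by linarith) hpos
  refine ⟨hD, ?_⟩
  rw [g, div_lt_iff_of_neg hD]
  nlinarith [mul_pos hcos hkey, hs3sq, sq_nonneg (Real.cos α)]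
end
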